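/- For all sufficiently large n divisible by 4, there exists a weakly connected simple directed graph G₀ on n vertices such that the probability that the directed two-hop process started at G₀ terminates within ⌊(n²·ln n)/32⌋ rounds is at most e^{−√n / 3}. -/

import Mathlib

open scoped Classical

noncomputable section

variable {V : Type} [Fintype V] [DecidableEq V]

/-- The out-neighbors of `u` in the directed graph `f`. -/
def outN (f : V → V → Bool) (u : V) : Finset V := Finset.univ.filter (fun v => f u v = true)

/-- The out-degree of `u` in the directed graph `f`. -/
def outDeg (f : V → V → Bool) (u : V) : ℕ := (outN f u).card

/-- The directed graph obtained from a choice function `c` in one round of the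
directed two-hop process: every vertex `u` adds the directed edge to the endpoint
`(c u).2` of its two-hop walk, provided it is not a self-loop; all additions are
simultaneous. -/
def dirNext (f : V → V → Bool) (c : V → V × V) : V → V → Bool :=
  fun a b => f a b || (decide (a ≠ b) && decide ((c a).2 = b))

/-- The probability that in one round of the directed two-hop process on the current
directed graph `f` the vertices make exactly the choices recorded by `c`: each vertex
`u` with at least one out-neighbor independently picks a uniformly random out-neighbor
`v = (c u).1` and, if `v` has at least one out-neighbor, a uniformly random
out-neighbor `w = (c u).2` of `v`.  Vertices with no out-neighbor get the dummy choice
`(u, u)`, and a dead-end first hop `v` gets the dummy second coordinate `u` (in both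
dummy cases no edge is added, as the would-be edge is a self-loop). -/
def dirWeight (f : V → V → Bool) (c : V → V × V) : ℝ :=
  ∏ u : V,
    if outDeg f u = 0 then (if c u = (u, u) then 1 else 0)
    else if (c u).1 ∈ outN f u then
      (if outDeg f (c u).1 = 0 then
        (if (c u).2 = u then (1 : ℝ) / (outDeg f u : ℝ) else 0)
       else if (c u).2 ∈ outN f (c u).1 then
        (1 : ℝ) / ((outDeg f u : ℝ) * (outDeg f (c u).1 : ℝ)) else 0)
    else 0

/-- Transition probability of one round of the directed two-hop process. -/
def dirStep (f g : V → V → Bool) : ℝ :=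
  ∑ c : V → V × V, if dirNext f c = g then dirWeight f c else 0

/-- `reaches f u v` means that the directed graph `f` contains a directed path from
`u` to `v`. -/
def reaches (f : V → V → Bool) (u v : V) : Prop :=
  Relation.ReflTransGen (fun a b => f a b = true) u v

/-- The directed two-hop process started at `f0` has terminated in the state `f` if,
for every ordered pair of distinct vertices `(u, v)` such that `f0` contains a directed
path from `u` to `v`, the directed edge `(u, v)` belongs to `f`. -/
def terminated (f0 f : V → V → Bool) : Prop :=
  ∀ u v : V, u ≠ v → reaches f0 u v → f u v = true

/-- `trajProb step g0 T E` is the probability, for the Markov chain on a finite state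
space `Γ` with one-step transition probabilities `step` started at `g0`, that the
trajectory `(g_0, g_1, …, g_T)` satisfies the event `E`; probabilities are realized as
a probability mass function on finite sequences of states.  (The trajectory is passed
to `E` as a function on `ℕ`, frozen at time `T`.) -/
def trajProb {Γ : Type} [Fintype Γ] (step : Γ → Γ → ℝ) (g0 : Γ) (T : ℕ)
    (E : (ℕ → Γ) → Prop) : ℝ :=
  ∑ s : Fin (T + 1) → Γ,
    if s 0 = g0 ∧ E (fun t => s ⟨min t T, Nat.lt_succ_of_le (Nat.min_le_right t T)⟩)
    then ∏ t : Fin T, step (s t.castSucc) (s t.succ) else 0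

/-- `distAt step g0 t` is the distribution (probability mass function) of the state at
time `t` of the Markov chain with one-step transition probabilities `step` started at
`g0`. -/
def distAt {Γ : Type} [Fintype Γ] (step : Γ → Γ → ℝ) (g0 : Γ) : ℕ → Γ → ℝ
  | 0 => fun g => if g = g0 then 1 else 0
  | (t + 1) => fun g => ∑ h : Γ, distAt step g0 t h * step h g

end

/-!
Start from the split star `splitStar p u S`: `p` points to every vertex outside a set `S ∋ p`
of `n / 2` vertices (among them `u`), `u` points to every vertex of `S`, and all other vertices
are sinks. Sinks never gain out-edges, so `p` gains an edge into `S` only when its two-hop walk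
passes through `u`; while `m` vertices of `S.erase p` are still missing from its
out-neighbourhood, this happens with probability at most `m / (|Sᶜ| |S|) = 4m / n²`, and
termination needs all of them. For this slow coupon collector the potential
`φ m = ∏_{i<m} (i+1)/(i+1+R)` satisfies `(m + 1) (φ m - φ (m + 1)) = R φ (m + 1)`, so `𝔼 φ`
grows by a factor at most `1 + 4R/n²` per round; as `φ 0 = 1`, termination by time `T` has
probability at most `(1 + 4R/n²)^T φ (n/2 - 1) ≤ exp (4RT/n²) (4R/n)^R`. For `R = ⌊√n⌋` and
`T = n² ln n / 32` this is about `exp (-(3/8) √n ln n)`.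
-/

lemma Fintype.sum_prod_mul_eval {ι X R : Type*} [Fintype ι] [DecidableEq ι] [Fintype X]
    [CommSemiring R] {w : ι → X → R} (hw : ∀ i, ∑ x, w i x = 1) (β : X → R) (p : ι) :
    ∑ c : ι → X, (∏ i, w i (c i)) * β (c p) = ∑ x, w p x * β x := by
  set g : ι → X → R := fun i x => w i x * if i = p then β x else 1
  calc ∑ c : ι → X, (∏ i, w i (c i)) * β (c p) = ∑ c : ι → X, ∏ i, g i (c i) := by
        refine Finset.sum_congr rfl fun c _ => ?_
        simp only [g, Finset.prod_mul_distrib, Fintype.prod_ite_eq']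
    _ = ∏ i, ∑ x, g i x := (Fintype.prod_sum g).symm
    _ = ∑ x, w p x * β x := by
        rw [Fintype.prod_eq_single p fun i hi => by simp [g, hi, hw]]
        simp [g]

lemma Fintype.sum_ite_mem_const {α R : Type*} [Fintype α] [DecidableEq α] [Semiring R]
    (s : Finset α) (r : R) : ∑ x, (if x ∈ s then r else 0) = s.card * r := by
  rw [Finset.sum_ite_mem, Finset.univ_inter, Finset.sum_const, nsmul_eq_mul]

section Potential

variable {Γ : Type} [Fintype Γ] (step : Γ → Γ → ℝ) (Φ : Γ → ℝ)

/-- `expectAt step Φ t g0` is `𝔼[Φ (X t)]` for the chain started at `g0`, as a sum over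
trajectories in the same form as `trajProb`. -/
noncomputable def expectAt (t : ℕ) (g0 : Γ) : ℝ :=
  ∑ s : Fin (t + 1) → Γ,
    (if s 0 = g0 then ∏ i : Fin t, step (s i.castSucc) (s i.succ) else 0) * Φ (s (Fin.last t))

lemma expectAt_zero (g0 : Γ) : expectAt step Φ 0 g0 = Φ g0 := by
  rw [expectAt, ← (Equiv.funUnique (Fin 1) Γ).symm.sum_comp]
  simp [Fin.last]

lemma expectAt_succ (t : ℕ) (g0 : Γ) :
    expectAt step Φ (t + 1) g0 = ∑ g1, step g0 g1 * expectAt step Φ t g1 := by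
  simp only [expectAt, Finset.mul_sum]
  rw [← Equiv.sum_comp (Fin.consEquiv fun _ : Fin (t + 2) => Γ), Fintype.sum_prod_type,
    Finset.sum_comm (γ := Γ)]
  simp only [Fin.consEquiv_apply, Fin.cons_zero, Fin.prod_univ_succ, Fin.cons_succ,
    ← Fin.succ_castSucc, Fin.castSucc_zero, Fin.cons_last, ite_mul, zero_mul, mul_ite, mul_zero]
  rw [Finset.sum_comm (γ := Γ)]
  simp only [Finset.sum_ite_eq', Finset.sum_ite_eq, Finset.mem_univ, if_true, mul_assoc]

variable {step Φ}

lemma expectAt_le_of_drift {Inv : Γ → Prop} {w : ℝ} (hw : 0 ≤ w)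
    (hstep : ∀ g g', 0 ≤ step g g') (hInv : ∀ g g', Inv g → step g g' ≠ 0 → Inv g')
    (hdrift : ∀ g, Inv g → ∑ g', step g g' * Φ g' ≤ w * Φ g) :
    ∀ t g0, Inv g0 → expectAt step Φ t g0 ≤ w ^ t * Φ g0
  | 0, g0, _ => by rw [expectAt_zero, pow_zero, one_mul]
  | t + 1, g0, h0 => calc
      expectAt step Φ (t + 1) g0 = ∑ g1, step g0 g1 * expectAt step Φ t g1 := expectAt_succ ..
      _ ≤ ∑ g1, step g0 g1 * (w ^ t * Φ g1) := Finset.sum_le_sum fun g1 _ => by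
        by_cases h : step g0 g1 = 0
        · simp [h]
        · exact mul_le_mul_of_nonneg_left
            (expectAt_le_of_drift hw hstep hInv hdrift t g1 (hInv g0 g1 h0 h)) (hstep g0 g1)
      _ = w ^ t * ∑ g1, step g0 g1 * Φ g1 := by
        rw [Finset.mul_sum]; exact Finset.sum_congr rfl fun _ _ => by ring
      _ ≤ w ^ (t + 1) * Φ g0 := by
        rw [pow_succ, mul_assoc]; exact mul_le_mul_of_nonneg_left (hdrift g0 h0) (by positivity)

lemma trajProb_le_expectAt (T : ℕ) (g0 : Γ) {E : (ℕ → Γ) → Prop}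
    (hstep : ∀ g g', 0 ≤ step g g') (hΦ : ∀ g, 0 ≤ Φ g)
    (hE : ∀ s : Fin (T + 1) → Γ, s 0 = g0 →
      (∀ i : Fin T, step (s i.castSucc) (s i.succ) ≠ 0) →
      E (fun t => s ⟨min t T, Nat.lt_succ_of_le (Nat.min_le_right t T)⟩) →
      1 ≤ Φ (s (Fin.last T))) :
    trajProb step g0 T E ≤ expectAt step Φ T g0 := by
  refine Finset.sum_le_sum fun s _ => ?_
  have hprod : 0 ≤ ∏ i : Fin T, step (s i.castSucc) (s i.succ) :=
    Finset.prod_nonneg fun i _ => hstep _ _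
  split_ifs with hs h0 h0
  · by_cases hzero : ∏ i : Fin T, step (s i.castSucc) (s i.succ) = 0
    · simp [hzero]
    · exact le_mul_of_one_le_right hprod
        (hE s hs.1 (fun i => Finset.prod_ne_zero_iff.mp hzero i (Finset.mem_univ i)) hs.2)
  · exact absurd hs.1 h0
  · exact mul_nonneg hprod (hΦ _)
  · simp

end Potential

noncomputable def couponPotential (R : ℝ) (j : ℕ) : ℝ :=
  ∏ i ∈ Finset.range j, ((i : ℝ) + 1) / ((i : ℝ) + 1 + R)

section CouponPotential

open Finset Nat

variable {R : ℝ}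

@[simp] lemma couponPotential_zero : couponPotential R 0 = 1 := by simp [couponPotential]

lemma couponPotential_succ (j : ℕ) :
    couponPotential R (j + 1) = couponPotential R j * (((j : ℝ) + 1) / ((j : ℝ) + 1 + R)) :=
  prod_range_succ ..

lemma couponPotential_nonneg (hR : 0 ≤ R) (j : ℕ) : 0 ≤ couponPotential R j :=
  prod_nonneg fun _ _ => by positivity

lemma couponPotential_succ_le (hR : 0 ≤ R) (j : ℕ) :
    couponPotential R (j + 1) ≤ couponPotential R j := by
  rw [couponPotential_succ]
  exact mul_le_of_le_one_right (couponPotential_nonneg hR j)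
    (div_le_one_of_le₀ (by linarith) (by positivity))

lemma couponPotential_le_pred (hR : 0 ≤ R) (m : ℕ) :
    couponPotential R m ≤ couponPotential R (m - 1) := by
  cases m with
  | zero => rfl
  | succ j => exact couponPotential_succ_le hR j

lemma succ_mul_couponPotential_sub (hR : 0 ≤ R) (j : ℕ) :
    ((j : ℝ) + 1) * (couponPotential R j - couponPotential R (j + 1)) =
      R * couponPotential R (j + 1) := by
  rw [couponPotential_succ]
  field_simp
  ring

lemma natCast_mul_couponPotential_pred_sub_le (hR : 0 ≤ R) (m : ℕ) :
    (m : ℝ) * (couponPotential R (m - 1) - couponPotential R m) ≤ R * couponPotential R m := by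
  cases m with
  | zero => simpa using hR
  | succ j => exact_mod_cast (succ_mul_couponPotential_sub hR j).le

lemma couponPotential_natCast (a b : ℕ) :
    couponPotential a b = (a ! * b ! : ℝ) / (a + b)! := by
  have hshift : ((a + b)! : ℝ) = a ! * ∏ i ∈ range b, ((i : ℝ) + 1 + a) := by
    rw [← factorial_mul_ascFactorial, ascFactorial_eq_prod_range]
    push_cast
    congr 1
    exact prod_congr rfl fun i _ => by ring
  have hfact : ∏ i ∈ range b, ((i : ℝ) + 1) = b ! := by
    exact_mod_cast prod_range_add_one_eq_factorial b
  rw [couponPotential, prod_div_distrib, hshift, hfact]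
  field_simp

lemma couponPotential_natCast_comm (a b : ℕ) : couponPotential a b = couponPotential b a := by
  rw [couponPotential_natCast, couponPotential_natCast, add_comm, mul_comm]

lemma couponPotential_natCast_le {r c : ℕ} (hc : 0 < c) :
    couponPotential r c ≤ ((r : ℝ) / c) ^ r := by
  rw [couponPotential_natCast_comm, couponPotential]
  calc _ ≤ ∏ _j ∈ range r, (r : ℝ) / c := by
        refine prod_le_prod (fun _ _ => by positivity) fun j hj => ?_
        have hjr : (j : ℝ) + 1 ≤ r := by exact_mod_cast mem_range.mp hj
        rw [div_le_div_iff₀ (by positivity) (by positivity)]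
        nlinarith
    _ = ((r : ℝ) / c) ^ r := by rw [prod_const, card_range]

end CouponPotential

lemma outN_mono {V : Type} [Fintype V] {f g : V → V → Bool} (h : f ≤ g) (a : V) :
    outN f a ⊆ outN g a := by
  intro b hb
  simp only [outN, Finset.mem_filter, Finset.mem_univ, true_and] at hb ⊢
  exact le_antisymm (Bool.le_true _) (hb ▸ h a b)

lemma le_dirNext {V : Type} [DecidableEq V] (f : V → V → Bool) (c : V → V × V) :
    f ≤ dirNext f c :=
  fun _ _ => Bool.left_le_or _ _

section TwoHop

variable {V : Type} [Fintype V] [DecidableEq V]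

noncomputable def choiceWeight (f : V → V → Bool) (a : V) (x : V × V) : ℝ :=
  if outDeg f a = 0 then (if x = (a, a) then 1 else 0)
  else if x.1 ∈ outN f a then
    (if outDeg f x.1 = 0 then
      (if x.2 = a then (1 : ℝ) / (outDeg f a : ℝ) else 0)
     else if x.2 ∈ outN f x.1 then
      (1 : ℝ) / ((outDeg f a : ℝ) * (outDeg f x.1 : ℝ)) else 0)
  else 0

lemma dirWeight_eq_prod (f : V → V → Bool) (c : V → V × V) :
    dirWeight f c = ∏ a, choiceWeight f a (c a) := rfl

lemma choiceWeight_nonneg (f : V → V → Bool) (a : V) (x : V × V) :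
    0 ≤ choiceWeight f a x := by
  unfold choiceWeight
  split_ifs <;> positivity

lemma sum_choiceWeight (f : V → V → Bool) (a : V) : ∑ x, choiceWeight f a x = 1 := by
  by_cases ha : outDeg f a = 0
  · simp [choiceWeight, ha]
  have hsecond : ∀ v ∈ outN f a, ∑ w, choiceWeight f a (v, w) = 1 / outDeg f a := by
    intro v hv
    by_cases hv0 : outDeg f v = 0
    · simp [choiceWeight, ha, hv, hv0]
    · simp only [choiceWeight, ha, hv, hv0, if_false, if_true]
      rw [Fintype.sum_ite_mem_const, ← outDeg]
      field_simp
  rw [Fintype.sum_prod_type]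
  calc ∑ v, ∑ w, choiceWeight f a (v, w)
      = ∑ v, if v ∈ outN f a then 1 / (outDeg f a : ℝ) else 0 := by
        refine Finset.sum_congr rfl fun v _ => ?_
        split_ifs with hv
        · exact hsecond v hv
        · simp [choiceWeight, ha, hv]
    _ = 1 := by
        rw [Fintype.sum_ite_mem_const, ← outDeg]
        field_simp

lemma choiceWeight_ne_zero_of_outDeg_eq_zero {f : V → V → Bool} {a : V} {x : V × V}
    (hw : choiceWeight f a x ≠ 0) (ha : outDeg f a = 0) : x = (a, a) := by
  by_contra hx
  simp [choiceWeight, ha, hx] at hw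

lemma dirWeight_nonneg (f : V → V → Bool) (c : V → V × V) : 0 ≤ dirWeight f c := by
  rw [dirWeight_eq_prod]
  exact Finset.prod_nonneg fun a _ => choiceWeight_nonneg f a (c a)

lemma dirStep_nonneg (f g : V → V → Bool) : 0 ≤ dirStep f g :=
  Finset.sum_nonneg fun c _ => by split_ifs <;> simp [dirWeight_nonneg]

lemma sum_dirStep_mul (f : V → V → Bool) (Φ : (V → V → Bool) → ℝ) :
    ∑ g, dirStep f g * Φ g = ∑ c, dirWeight f c * Φ (dirNext f c) := by
  simp only [dirStep, Finset.sum_mul, ite_mul, zero_mul]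
  rw [Finset.sum_comm]
  simp

lemma exists_of_dirStep_ne_zero {f g : V → V → Bool} (h : dirStep f g ≠ 0) :
    ∃ c, dirWeight f c ≠ 0 ∧ dirNext f c = g := by
  obtain ⟨c, -, hc⟩ := Finset.exists_ne_zero_of_sum_ne_zero h
  by_cases hcg : dirNext f c = g
  · exact ⟨c, by simpa [hcg] using hc, hcg⟩
  · simp [hcg] at hc

lemma le_of_dirStep_ne_zero {f g : V → V → Bool} (h : dirStep f g ≠ 0) : f ≤ g := by
  obtain ⟨c, -, rfl⟩ := exists_of_dirStep_ne_zero h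
  exact le_dirNext f c

lemma outN_dirNext (f : V → V → Bool) (c : V → V × V) (a : V) :
    outN (dirNext f c) a = if (c a).2 = a then outN f a else insert (c a).2 (outN f a) := by
  ext b
  split_ifs with h
  · simp [outN, dirNext, h]
  · simp only [outN, dirNext, Finset.mem_filter, Finset.mem_univ, Finset.mem_insert]
    grind

end TwoHop

section Hub

variable {V : Type} [Fintype V] [DecidableEq V]

structure TwoHubState (p u : V) (dp du : ℕ) (f : V → V → Bool) : Prop where
  outDeg_eq_zero : ∀ a, a ≠ p → a ≠ u → outDeg f a = 0
  le_outDeg_left : dp ≤ outDeg f p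
  le_outDeg_right : du ≤ outDeg f u

variable {p u : V} {dp du : ℕ} {f : V → V → Bool}

lemma TwoHubState.dirNext (hf : TwoHubState p u dp du f) {c : V → V × V}
    (hc : dirWeight f c ≠ 0) : TwoHubState p u dp du (dirNext f c) where
  outDeg_eq_zero a hap hau := by
    rw [dirWeight_eq_prod] at hc
    have hca := choiceWeight_ne_zero_of_outDeg_eq_zero
      (Finset.prod_ne_zero_iff.mp hc a (Finset.mem_univ a)) (hf.outDeg_eq_zero a hap hau)
    rw [outDeg, outN_dirNext, if_pos (by rw [hca]), ← outDeg, hf.outDeg_eq_zero a hap hau]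
  le_outDeg_left := hf.le_outDeg_left.trans (Finset.card_le_card (outN_mono (le_dirNext f c) p))
  le_outDeg_right := hf.le_outDeg_right.trans (Finset.card_le_card (outN_mono (le_dirNext f c) u))

lemma TwoHubState.of_dirStep_ne_zero (hf : TwoHubState p u dp du f) {g : V → V → Bool}
    (hg : dirStep f g ≠ 0) : TwoHubState p u dp du g := by
  obtain ⟨c, hc, rfl⟩ := exists_of_dirStep_ne_zero hg
  exact hf.dirNext hc

lemma choiceWeight_le_of_notMem (hsink : ∀ a, a ≠ p → a ≠ u → outDeg f a = 0)
    {x : V × V} (hxp : x.2 ≠ p) (hxN : x.2 ∉ outN f p) :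
    choiceWeight f p x ≤ if x.1 = u then 1 / ((outDeg f p : ℝ) * outDeg f u) else 0 := by
  have hrhs : 0 ≤ if x.1 = u then 1 / ((outDeg f p : ℝ) * outDeg f u) else 0 := by
    split_ifs <;> positivity
  have hvia : outDeg f x.1 ≠ 0 → x.2 ∈ outN f x.1 → x.1 = u := fun h0 hmem => by
    by_contra hu
    have hx1 : x.1 = p := by_contra fun hp => h0 (hsink _ hp hu)
    exact hxN (hx1 ▸ hmem)
  unfold choiceWeight
  split_ifs <;> first | positivity | simp_all

lemma sum_choiceWeight_mul_indicator_le (hsink : ∀ a, a ≠ p → a ≠ u → outDeg f a = 0)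
    {M : Finset V} (hpM : p ∉ M) (hMN : Disjoint M (outN f p)) :
    ∑ x, choiceWeight f p x * (if x.2 ∈ M then 1 else 0) ≤
      M.card / ((outDeg f p : ℝ) * outDeg f u) := by
  calc ∑ x, choiceWeight f p x * (if x.2 ∈ M then 1 else 0)
      ≤ ∑ x : V × V, (if x.1 = u then 1 / ((outDeg f p : ℝ) * outDeg f u) else 0) *
          (if x.2 ∈ M then 1 else 0) := Finset.sum_le_sum fun x _ => by
        by_cases hx : x.2 ∈ M
        · simpa only [hx, if_true, mul_one] using choiceWeight_le_of_notMem hsink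
            (ne_of_mem_of_not_mem hx hpM) (Finset.disjoint_left.mp hMN hx)
        · simp [hx]
    _ = M.card / ((outDeg f p : ℝ) * outDeg f u) := by
        rw [Fintype.sum_prod_type]
        simp [div_eq_mul_inv]

lemma sdiff_outN_dirNext {C : Finset V} (hpC : p ∉ C) (c : V → V × V) :
    C \ outN (dirNext f c) p = (C \ outN f p).erase (c p).2 := by
  rw [outN_dirNext]
  split_ifs with h
  · rw [h, Finset.erase_eq_of_notMem fun hp => hpC (Finset.mem_sdiff.mp hp).1]
  · rw [Finset.sdiff_insert]

lemma sum_dirStep_mul_couponPotential_le {R : ℝ} (hR : 0 ≤ R) {C : Finset V} (hpC : p ∉ C)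
    (hdp : 0 < dp) (hdu : 0 < du) (hf : TwoHubState p u dp du f) :
    ∑ g, dirStep f g * couponPotential R (C \ outN g p).card ≤
      (1 + R / (dp * du)) * couponPotential R (C \ outN f p).card := by
  set M := C \ outN f p
  set Δ := couponPotential R (M.card - 1) - couponPotential R M.card
  have hΔ : 0 ≤ Δ := sub_nonneg.mpr (couponPotential_le_pred hR _)
  set β : V × V → ℝ := fun x => couponPotential R M.card + (if x.2 ∈ M then 1 else 0) * Δ
  have hnext : ∀ c, couponPotential R (C \ outN (dirNext f c) p).card = β (c p) := fun c => by
    rw [sdiff_outN_dirNext hpC]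
    change couponPotential R (M.erase (c p).2).card = β (c p)
    by_cases h : (c p).2 ∈ M
    · simp only [β, h, Finset.card_erase_of_mem h, if_true]; ring
    · simp only [β, h, Finset.erase_eq_of_notMem h, if_false]; ring
  have hdeg : (dp : ℝ) * du ≤ (outDeg f p : ℝ) * outDeg f u := by
    gcongr
    exacts [hf.le_outDeg_left, hf.le_outDeg_right]
  calc ∑ g, dirStep f g * couponPotential R (C \ outN g p).card
      = ∑ c, dirWeight f c * β (c p) := by simp only [sum_dirStep_mul, hnext]
    _ = ∑ x, choiceWeight f p x * β x := Fintype.sum_prod_mul_eval (sum_choiceWeight f) β p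
    _ = couponPotential R M.card +
          (∑ x, choiceWeight f p x * (if x.2 ∈ M then 1 else 0)) * Δ := by
        simp only [β, mul_add, Finset.sum_add_distrib, ← Finset.sum_mul, sum_choiceWeight,
          one_mul, ← mul_assoc]
    _ ≤ couponPotential R M.card + M.card / ((dp : ℝ) * du) * Δ := by
        gcongr
        calc _ ≤ M.card / ((outDeg f p : ℝ) * outDeg f u) :=
              sum_choiceWeight_mul_indicator_le hf.outDeg_eq_zero
                (fun h => hpC (Finset.mem_sdiff.mp h).1) Finset.sdiff_disjoint
          _ ≤ M.card / ((dp : ℝ) * du) := by gcongr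
    _ ≤ (1 + R / (dp * du)) * couponPotential R M.card := by
        have := natCast_mul_couponPotential_pred_sub_le hR M.card
        rw [div_mul_eq_mul_div, add_mul, one_mul, div_mul_eq_mul_div]
        gcongr

end Hub

lemma weaklyConnected_of_reaches {V : Type} {f : V → V → Bool} {p : V}
    (h : ∀ v, reaches f p v) (a b : V) :
    Relation.ReflTransGen (fun a b => f a b = true ∨ f b a = true) a b :=
  .trans
    (Relation.ReflTransGen.mono (fun _ _ => Or.inr) _ _ (Relation.ReflTransGen.swap _ _ (h a)))
    (Relation.ReflTransGen.mono (fun _ _ => Or.inl) _ _ (h b))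

section SplitStar

variable {V : Type} [DecidableEq V]

def splitStar (p u : V) (S : Finset V) : V → V → Bool :=
  fun a b => decide ((a = p ∧ b ∉ S) ∨ (a = u ∧ b ∈ S))

variable {p u : V} {S : Finset V}

lemma splitStar_self (hp : p ∈ S) (hu : u ∉ S) (v : V) : splitStar p u S v v = false := by
  simp only [splitStar, decide_eq_false_iff_not]
  rintro (⟨rfl, hv⟩ | ⟨rfl, hv⟩)
  exacts [hv hp, hu hv]

lemma reaches_splitStar (hu : u ∉ S) (v : V) : reaches (splitStar p u S) p v := by
  have hpu : splitStar p u S p u = true := by simp [splitStar, hu]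
  by_cases hv : v ∈ S
  · refine .head hpu (.single ?_)
    simp [splitStar, hv]
  · exact .single (by simp [splitStar, hv])

variable [Fintype V]

lemma twoHubState_splitStar (hp : p ∈ S) (hu : u ∉ S) :
    TwoHubState p u Sᶜ.card S.card (splitStar p u S) := by
  have hpu : p ≠ u := ne_of_mem_of_not_mem hp hu
  refine ⟨fun a hap hau => ?_, le_of_eq ?_, le_of_eq ?_⟩ <;>
    simp only [outDeg, outN, splitStar, decide_eq_true_eq]
  · simp [hap, hau]
  · congr 1; ext b; simp [hpu]
  · congr 1; ext b; simp [hpu.symm]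

lemma erase_subset_outN_of_terminated (hu : u ∉ S) {g : V → V → Bool}
    (hg : terminated (splitStar p u S) g) : S.erase p ⊆ outN g p := fun y hy => by
  simpa [outN] using hg p y (Finset.ne_of_mem_erase hy).symm (reaches_splitStar hu y)

lemma card_erase_sdiff_outN_splitStar (hp : p ∈ S) (hu : u ∉ S) :
    (S.erase p \ outN (splitStar p u S) p).card = S.card - 1 := by
  rw [Finset.sdiff_eq_self_of_disjoint, Finset.card_erase_of_mem hp]
  rw [Finset.disjoint_left]
  intro y hy
  simp [outN, splitStar, Finset.mem_of_mem_erase hy, ne_of_mem_of_not_mem hp hu]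

theorem trajProb_terminated_splitStar_le (hp : p ∈ S) (hu : u ∉ S) {R : ℝ} (hR : 0 ≤ R)
    (T : ℕ) :
    trajProb dirStep (splitStar p u S) T
        (fun g => ∃ t ≤ T, terminated (splitStar p u S) (g t)) ≤
      (1 + R / (Sᶜ.card * S.card)) ^ T * couponPotential R (S.card - 1) := by
  set Φ : (V → V → Bool) → ℝ := fun g => couponPotential R (S.erase p \ outN g p).card
  have hdp : 0 < Sᶜ.card := Finset.card_pos.mpr ⟨u, Finset.mem_compl.mpr hu⟩
  have hdu : 0 < S.card := Finset.card_pos.mpr ⟨p, hp⟩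
  refine (trajProb_le_expectAt T _ dirStep_nonneg (fun _ => couponPotential_nonneg hR _)
    (Φ := Φ) ?_).trans ?_
  · rintro s - hs ⟨t, -, ht⟩
    have hmono : Monotone s := Fin.monotone_iff_le_succ.mpr fun i => le_of_dirStep_ne_zero (hs i)
    have hsub : S.erase p ⊆ outN (s (Fin.last T)) p :=
      (erase_subset_outN_of_terminated hu ht).trans (outN_mono (hmono (Fin.le_last _)) p)
    simp [Φ, Finset.sdiff_eq_empty_iff_subset.mpr hsub]
  calc expectAt dirStep Φ T (splitStar p u S)
      ≤ (1 + R / (Sᶜ.card * S.card)) ^ T * Φ (splitStar p u S) :=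
        expectAt_le_of_drift (by positivity) dirStep_nonneg
          (fun _ _ hg hstep => hg.of_dirStep_ne_zero hstep)
          (fun _ hg => sum_dirStep_mul_couponPotential_le hR (Finset.notMem_erase p S) hdp hdu hg)
          T _ (twoHubState_splitStar hp hu)
    _ = _ := by simp only [Φ, card_erase_sdiff_outN_splitStar hp hu]

end SplitStar

lemma one_add_pow_le_exp_mul {x : ℝ} (hx : 0 ≤ x) (T : ℕ) :
    (1 + x) ^ T ≤ Real.exp (x * T) := by
  rw [mul_comm, Real.exp_nat_mul]
  exact pow_le_pow_left₀ (by linarith) (by linarith [Real.add_one_le_exp x]) T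

open Real in
lemma one_add_pow_mul_couponPotential_le {n : ℕ} (hn : 2 ^ 8 ≤ n) (heven : 2 ∣ n) {T : ℕ}
    (hT : (T : ℝ) ≤ (n : ℝ) ^ 2 * log n / 32) :
    (1 + (n.sqrt : ℝ) / ((n / 2 : ℕ) * (n / 2 : ℕ))) ^ T *
        couponPotential n.sqrt (n / 2 - 1) ≤ exp (-√n / 3) := by
  set r := n.sqrt
  have hn' : (2 ^ 8 : ℝ) ≤ n := by exact_mod_cast hn
  have hhalf : ((n / 2 : ℕ) : ℝ) = n / 2 := Nat.cast_div_charZero heven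
  have hc : (n : ℝ) / 4 ≤ ((n / 2 - 1 : ℕ) : ℝ) := by
    rw [Nat.cast_sub (by omega), hhalf]; push_cast; linarith
  have hc0 : (0 : ℝ) < ((n / 2 - 1 : ℕ) : ℝ) := by linarith
  have hr_le : (r : ℝ) ≤ √n := Real.nat_sqrt_le_real_sqrt
  have hr_ge : √n / 2 ≤ r := by
    have h1 : (1 : ℝ) ≤ r := by exact_mod_cast Nat.le_sqrt.mpr (by omega)
    linarith [Real.real_sqrt_lt_nat_sqrt_succ (a := n)]
  have hr0 : (0 : ℝ) < r := by linarith [Real.sqrt_pos.mpr (show (0 : ℝ) < n by linarith)]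
  have hlog : 8 * log 2 ≤ log n := by
    rw [← Real.log_rpow two_pos]; exact Real.log_le_log (by positivity) (by exact_mod_cast hn')
  have hlog2 := Real.log_two_gt_d9
  have hdrift : r / ((n : ℝ) / 2 * (n / 2)) * T ≤ r * log n / 8 := by
    rw [div_mul_eq_mul_div, div_le_div_iff₀ (by positivity) (by norm_num)]
    nlinarith [mul_le_mul_of_nonneg_left hT (le_of_lt hr0)]
  have hstart : r * log (r / ((n / 2 - 1 : ℕ) : ℝ)) ≤ r * (2 * log 2 - log n / 2) := by
    gcongr
    calc log (r / ((n / 2 - 1 : ℕ) : ℝ)) ≤ log (√n / (n / 4)) := by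
          gcongr
      _ = 2 * log 2 - log n / 2 := by
          rw [Real.log_div (by positivity) (by positivity), Real.log_sqrt (by positivity),
            Real.log_div (by positivity) (by norm_num), show (4 : ℝ) = 2 ^ 2 by norm_num,
            Real.log_pow]
          push_cast; ring
  calc _ ≤ exp (r / ((n : ℝ) / 2 * (n / 2)) * T) *
        exp (r * log (r / ((n / 2 - 1 : ℕ) : ℝ))) := by
        rw [hhalf]
        refine mul_le_mul (one_add_pow_le_exp_mul (by positivity) T) ?_
          (couponPotential_nonneg r.cast_nonneg _) (Real.exp_pos _).le
        rw [Real.exp_nat_mul, Real.exp_log (by positivity)]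
        exact couponPotential_natCast_le (by omega)
    _ ≤ exp (-√n / 3) := by
        rw [← Real.exp_add, Real.exp_le_exp]
        nlinarith

/-- For all sufficiently large `n` divisible by `4`, there is a
weakly connected simple directed graph `G₀` (no self-loops) on `n` vertices such that
the probability that the directed two-hop process started at `G₀` terminates within
`⌊(n²·ln n)/32⌋` rounds is at most `exp(−√n/3)`. -/
theorem directed_twoHop_weakly_connected_lower_bound :
    ∃ N : ℕ, ∀ n : ℕ, N ≤ n → 4 ∣ n →
      ∃ f0 : Fin n → Fin n → Bool,
        (∀ v, f0 v v = false) ∧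
        (∀ u v : Fin n,
          Relation.ReflTransGen (fun a b => f0 a b = true ∨ f0 b a = true) u v) ∧
        ∀ T : ℕ, T = ⌊((n : ℝ) ^ 2 * Real.log n) / 32⌋₊ →
          trajProb dirStep f0 T (fun g => ∃ t ≤ T, terminated f0 (g t)) ≤
            Real.exp (-Real.sqrt n / 3) := by
  refine ⟨2 ^ 8, fun n hn h4 => ?_⟩
  have h2 : 2 ∣ n := dvd_trans (by norm_num) h4
  set u : Fin n := ⟨n / 2, by omega⟩
  have hp : (⟨0, by omega⟩ : Fin n) ∈ Finset.Iio u :=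
    Finset.mem_Iio.mpr (Fin.mk_lt_mk.mpr (by omega))
  have hu : u ∉ Finset.Iio u := by simp
  refine ⟨splitStar _ u (Finset.Iio u), splitStar_self hp hu,
    weaklyConnected_of_reaches (reaches_splitStar hu), fun T hT => ?_⟩
  have hS : (Finset.Iio u).card = n / 2 := Fin.card_Iio u
  have hSc : (Finset.Iio u)ᶜ.card = n / 2 := by
    rw [Finset.card_compl, Fintype.card_fin, hS]; omega
  calc _ ≤ _ := trajProb_terminated_splitStar_le hp hu (Nat.cast_nonneg n.sqrt) T
    _ ≤ _ := by
      rw [hS, hSc]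
      exact one_add_pow_mul_couponPotential_le hn h2 (hT ▸ Nat.floor_le (by positivity))
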